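/- arXiv:1611.09014 — 2 statements merged into one kernel-verified Lean document; each statement's English description precedes it below -/
import Mathlib

section
/- For every clause set M, the clause set crr(M) is range-restricted, and M is satisfiable if and only if crr(M) is satisfiable. -/
namespace BUMG

/-- First-order terms over function symbols `F`, with variables indexed by `ℕ`. -/
inductive Term (F : Type) : Type where
  | var : ℕ → Term F
  | app : F → List (Term F) → Term F

namespace Term
variable {F : Type}

/-- The list of variables occurring in a term. -/
def vars : Term F → List ℕ
  | var n => [n]
  | app _ ts => ts.attach.flatMap (fun t => vars t.1)
decreasing_by simp_wf; have := List.sizeOf_lt_of_mem t.2; omega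

/-- The function symbols (with the arity of the occurrence) occurring in a term. -/
def funcs : Term F → List (F × ℕ)
  | var _ => []
  | app f ts => (f, ts.length) :: ts.attach.flatMap (fun t => funcs t.1)
decreasing_by simp_wf; have := List.sizeOf_lt_of_mem t.2; omega

/-- Applying a substitution to a term. -/
def subst (g : ℕ → Term F) : Term F → Term F
  | var n => g n
  | app f ts => app f (ts.attach.map (fun t => subst g t.1))
decreasing_by simp_wf; have := List.sizeOf_lt_of_mem t.2; omega

/-- The number of occurrences of symbols (variables and function symbols) in a term. -/
def size : Term F → ℕ
  | var _ => 1
  | app _ ts => 1 + (ts.attach.map (fun t => size t.1)).sum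
decreasing_by simp_wf; have := List.sizeOf_lt_of_mem t.2; omega

/-- A term is ground iff it contains no variables. -/
def IsGround (t : Term F) : Prop := t.vars = []

def isVar : Term F → Bool
  | var _ => true
  | app _ _ => false

/-- A proper functional term is a term that is neither a variable nor a constant. -/
def isPF : Term F → Bool
  | app _ (_ :: _) => true
  | _ => false

/-- The subterm relation. -/
inductive Subterm : Term F → Term F → Prop
  | refl (t : Term F) : Subterm t t
  | app {s t : Term F} {f : F} {ts : List (Term F)} :
      t ∈ ts → Subterm s t → Subterm s (app f ts)

end Term

/-- Atoms over predicate symbols `P` and function symbols `F`. -/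
structure Atom (P F : Type) where
  pred : P
  args : List (Term F)

namespace Atom
variable {P F : Type}

def subst (g : ℕ → Term F) (a : Atom P F) : Atom P F := ⟨a.pred, a.args.map (Term.subst g)⟩
def vars (a : Atom P F) : List ℕ := a.args.flatMap Term.vars
def IsGround (a : Atom P F) : Prop := a.vars = []
def funcs (a : Atom P F) : List (F × ℕ) := a.args.flatMap Term.funcs
/-- Whether the atom contains a proper functional term. -/
def hasPF (a : Atom P F) : Bool := a.args.any Term.isPF
def size (a : Atom P F) : ℕ := 1 + (a.args.map Term.size).sum

end Atom

/-- A clause `H₁ ∨ ... ∨ Hₘ ← B₁ ∧ ... ∧ Bₖ` with head atoms `heads`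
and body atoms `body`. -/
structure Clause (P F : Type) where
  heads : List (Atom P F)
  body : List (Atom P F)

namespace Clause
variable {P F : Type}

def atoms (C : Clause P F) : List (Atom P F) := C.heads ++ C.body
def vars (C : Clause P F) : List ℕ := C.atoms.flatMap Atom.vars
def bodyVars (C : Clause P F) : List ℕ := C.body.flatMap Atom.vars
def headVars (C : Clause P F) : List ℕ := C.heads.flatMap Atom.vars
def maxVar (C : Clause P F) : ℕ := C.vars.foldr max 0
def subst (g : ℕ → Term F) (C : Clause P F) : Clause P F :=
  ⟨C.heads.map (Atom.subst g), C.body.map (Atom.subst g)⟩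
/-- The predicate symbols (with the arity of the occurrence) occurring in a clause. -/
def preds (C : Clause P F) : List (P × ℕ) := C.atoms.map (fun a => (a.pred, a.args.length))
/-- The function symbols (with the arity of the occurrence) occurring in a clause. -/
def funcs (C : Clause P F) : List (F × ℕ) := C.atoms.flatMap Atom.funcs
/-- The number of occurrences of symbols in a clause. -/
def size (C : Clause P F) : ℕ := (C.atoms.map Atom.size).sum

/-- A clause is range-restricted iff every variable occurring in it occurs in its body. -/
def RangeRestricted (C : Clause P F) : Prop := ∀ v ∈ C.vars, v ∈ C.bodyVars

/-- A Bernays–Schönfinkel clause: every functional term occurring in it is a constant. -/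
def BS (C : Clause P F) : Prop := ∀ fn ∈ C.funcs, fn.2 = 0

end Clause

/-- A clause set is range-restricted iff all its clauses are. -/
def RangeRestrictedSet {P F : Type} (M : Set (Clause P F)) : Prop :=
  ∀ C ∈ M, C.RangeRestricted

/-- The predicate symbols (with arities) occurring in a clause set. -/
def predsOf {P F : Type} (M : Set (Clause P F)) : Set (P × ℕ) :=
  { pn | ∃ C ∈ M, pn ∈ C.preds }

/-- The function symbols (with arities) occurring in a clause set. -/
def funcsOf {P F : Type} (M : Set (Clause P F)) : Set (F × ℕ) :=
  { fn | ∃ C ∈ M, fn ∈ C.funcs }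

/-- A signature: a set of predicate symbols with arities and
a set of function symbols with arities. -/
structure Sig (P F : Type) where
  preds : Set (P × ℕ)
  funcs : Set (F × ℕ)

/-- The clause set `M` is well-formed over the signature `σ`: all symbols occurring in `M`
belong to `σ` (with matching arities). -/
def WFSet {P F : Type} (σ : Sig P F) (M : Set (Clause P F)) : Prop :=
  ∀ C ∈ M, (∀ pn ∈ C.preds, pn ∈ σ.preds) ∧ (∀ fn ∈ C.funcs, fn ∈ σ.funcs)

/-- The total number of occurrences of symbols in a clause set. -/
noncomputable def setSize {P F : Type} (M : Set (Clause P F)) : ℕ :=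
  ∑ᶠ C ∈ M, C.size

/-! ### Herbrand semantics -/

/-- A substitution is ground iff it maps every variable to a ground term. -/
def GroundSubst {F : Type} (g : ℕ → Term F) : Prop := ∀ n, (g n).IsGround

/-- A (Herbrand) interpretation `I` (a set of ground atoms) satisfies a clause iff
it satisfies every ground instance of it. -/
def satClause {P F : Type} (I : Set (Atom P F)) (C : Clause P F) : Prop :=
  ∀ g : ℕ → Term F, GroundSubst g →
    (∀ a ∈ C.body, a.subst g ∈ I) → ∃ a ∈ C.heads, a.subst g ∈ I

/-- A clause set is satisfiable iff some Herbrand interpretation (a set of ground atoms)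
satisfies every ground instance of every clause of it. -/
def Satisfiable {P F : Type} (M : Set (Clause P F)) : Prop :=
  ∃ I : Set (Atom P F), (∀ a ∈ I, a.IsGround) ∧ ∀ C ∈ M, satClause I C

/-! ### Equality axioms and E-satisfiability -/

/-- The equality atom `s ≈ t` (`eqP` being the distinguished equality predicate `≈`). -/
def eqAtom {P F : Type} (eqP : P) (s t : Term F) : Atom P F := ⟨eqP, [s, t]⟩

def rangeVars {F : Type} (n : ℕ) : List (Term F) := (List.range n).map Term.var

def xsList {F : Type} (n : ℕ) : List (Term F) := (List.range n).map (fun i => Term.var (2*i))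
def ysList {F : Type} (n : ℕ) : List (Term F) := (List.range n).map (fun i => Term.var (2*i+1))
def eqConjList {P F : Type} (eqP : P) (n : ℕ) : List (Atom P F) :=
  (List.range n).map (fun i => eqAtom eqP (Term.var (2*i)) (Term.var (2*i+1)))

/-- The equality axioms `EAX`: `≈` is reflexive, symmetric, transitive and compatible with
the given function and predicate symbols. -/
def EAX {P F : Type} (eqP : P) (Ps : Set (P × ℕ)) (Fs : Set (F × ℕ)) : Set (Clause P F) :=
  { ⟨[eqAtom eqP (Term.var 0) (Term.var 0)], []⟩,
    ⟨[eqAtom eqP (Term.var 1) (Term.var 0)], [eqAtom eqP (Term.var 0) (Term.var 1)]⟩,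
    ⟨[eqAtom eqP (Term.var 0) (Term.var 2)],
      [eqAtom eqP (Term.var 0) (Term.var 1), eqAtom eqP (Term.var 1) (Term.var 2)]⟩ } ∪
  { D | ∃ fn ∈ Fs,
      D = ⟨[eqAtom eqP (Term.app fn.1 (xsList fn.2)) (Term.app fn.1 (ysList fn.2))],
           eqConjList eqP fn.2⟩ } ∪
  { D | ∃ pn ∈ Ps,
      D = ⟨[⟨pn.1, ysList pn.2⟩], ⟨pn.1, xsList pn.2⟩ :: eqConjList eqP pn.2⟩ }

/-- A clause set `M` is E-satisfiable iff `M` together with the equality axioms for the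
symbols occurring in `M` is satisfiable. -/
def ESatisfiable {P F : Type} (eqP : P) (M : Set (Clause P F)) : Prop :=
  Satisfiable (M ∪ EAX eqP (predsOf M) (funcsOf M))

/-! ### Range-restricting transformations -/

/-- The atom `dom(t)`. -/
def domAtom {P F : Type} (domP : P) (t : Term F) : Atom P F := ⟨domP, [t]⟩

/-- The term `c` for a constant `c`. -/
def cTerm {F : Type} (c : F) : Term F := Term.app c []

/-- The clause `dom(c) ← ⊤`. -/
def domcClause {P F : Type} (domP : P) (c : F) : Clause P F :=
  ⟨[domAtom domP (cTerm c)], []⟩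

/-- Range-restricting a clause (Step (2) of `crr`, Step (3) of `rr`):
`H ← B` becomes `H ← B ∧ dom(x₁) ∧ ... ∧ dom(xₖ)` where `x₁,...,xₖ` are the variables
occurring in the head but not in the body. -/
def rangeRestrictClause {P F : Type} (domP : P) (C : Clause P F) : Clause P F :=
  ⟨C.heads, C.body ++
    ((C.headVars.filter (fun v => v ∉ C.bodyVars)).dedup).map
      (fun v => domAtom domP (Term.var v))⟩

/-- The argument list of the term abstraction of an atom: argument positions holding
non-variable terms are replaced by fresh variables. -/
def abstrArgs {F : Type} (base : ℕ) (ts : List (Term F)) : List (Term F) :=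
  ts.mapIdx (fun i t => if t.isVar then t else Term.var (base + i))

/-- Step (2) of the `rr` transformation: for each clause `H ← B` of `M`, each body atom
`P(t₁,...,tₙ)` of `B` with term abstraction `P(s₁,...,sₙ)` and abstraction substitution `α`,
the clauses `dom(xᵢ)α ← P(s₁,...,sₙ)` for every `xᵢ` in the domain of `α`. -/
def step2Set {P F : Type} (domP : P) (M : Set (Clause P F)) : Set (Clause P F) :=
  { D | ∃ C ∈ M, ∃ a ∈ C.body, ∃ i : Fin a.args.length,
        (a.args.get i).isVar = false ∧
        D = ⟨[domAtom domP (a.args.get i)],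
             [⟨a.pred, abstrArgs (C.maxVar + 1) a.args⟩]⟩ }

/-- Step (4) of the `rr` transformation: the clauses `dom(xᵢ) ← P(x₁,...,xₙ)` for every
`n`-ary predicate symbol `P` of the signature and every `1 ≤ i ≤ n`. -/
def step4Set {P F : Type} (domP : P) (Ps : Set (P × ℕ)) : Set (Clause P F) :=
  { D | ∃ pn ∈ Ps, ∃ i, i < pn.2 ∧
        D = ⟨[domAtom domP (Term.var i)], [⟨pn.1, rangeVars pn.2⟩]⟩ }

/-- Step (5) of the `rr` transformation: the clauses `dom(xᵢ) ← dom(f(x₁,...,xₙ))` for every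
`n`-ary function symbol `f` of the signature and every `1 ≤ i ≤ n`. -/
def step5Set {P F : Type} (domP : P) (Fs : Set (F × ℕ)) : Set (Clause P F) :=
  { D | ∃ fn ∈ Fs, ∃ i, i < fn.2 ∧
        D = ⟨[domAtom domP (Term.var i)],
             [domAtom domP (Term.app fn.1 (rangeVars fn.2))]⟩ }

/-- The new range-restricting transformation `rr` (over the signature `σ`, with fresh unary
predicate symbol `dom` and constant `c`): the clauses of `M`, the clause `dom(c) ← ⊤` and
the Step-(2) clauses, all range-restricted by Step (3), together with the Step-(4) and
Step-(5) clauses. -/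
def rr {P F : Type} [DecidableEq P] [DecidableEq F] (σ : Sig P F) (domP : P) (c : F)
    (M : Set (Clause P F)) : Set (Clause P F) :=
  (rangeRestrictClause domP '' (M ∪ {domcClause domP c} ∪ step2Set domP M))
  ∪ step4Set domP σ.preds ∪ step5Set domP σ.funcs

/-- Step (3) of the classical transformation `crr`: the clauses
`dom(f(x₁,...,xₙ)) ← dom(x₁) ∧ ... ∧ dom(xₙ)` enumerating the Herbrand universe. -/
def crrStep3 {P F : Type} (domP : P) (Fs : Set (F × ℕ)) : Set (Clause P F) :=
  { D | ∃ fn ∈ Fs,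
        D = ⟨[domAtom domP (Term.app fn.1 (rangeVars fn.2))],
             (List.range fn.2).map (fun i => domAtom domP (Term.var i))⟩ }

/-- The classical range-restricting transformation `crr`. -/
def crr {P F : Type} [DecidableEq P] [DecidableEq F] (σ : Sig P F) (domP : P) (c : F)
    (M : Set (Clause P F)) : Set (Clause P F) :=
  (rangeRestrictClause domP '' (M ∪ {domcClause domP c})) ∪ crrStep3 domP σ.funcs

/-! ### Shifting -/

/-- Partial flattening of the arguments of a non-equational body atom: top-level proper
functional terms are replaced by fresh variables. The `j`-th body atom uses the fresh
variables `base + Nat.pair j i`. -/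
def pfArgs {P F : Type} [DecidableEq P] (eqP : P) (base j : ℕ) (a : Atom P F) : Atom P F :=
  if a.pred = eqP then a
  else ⟨a.pred, a.args.mapIdx (fun i t => if t.isPF then Term.var (base + Nat.pair j i) else t)⟩

/-- The equations `tᵢ ≈ xᵢ` introduced by partially flattening a body atom. -/
def pfEqs {P F : Type} [DecidableEq P] (eqP : P) (base j : ℕ) (a : Atom P F) :
    List (Atom P F) :=
  if a.pred = eqP then []
  else (a.args.mapIdx (fun i t => (i, t))).filterMap
        (fun p => if p.2.isPF then
            some (eqAtom eqP p.2 (Term.var (base + Nat.pair j p.1))) else none)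

/-- Partial flattening of a clause. -/
def pfClause {P F : Type} [DecidableEq P] (eqP : P) (C : Clause P F) : Clause P F :=
  ⟨C.heads,
   C.body.mapIdx (fun j a => pfArgs eqP (C.maxVar + 1) j a) ++
   (C.body.mapIdx (fun j a => pfEqs eqP (C.maxVar + 1) j a)).flatten⟩

/-- The reflexivity unit clause `x ≈ x ← ⊤`. -/
def reflClause {P F : Type} (eqP : P) : Clause P F :=
  ⟨[eqAtom eqP (Term.var 0) (Term.var 0)], []⟩

/-- The partial flattening transformation `pf`. -/
def pf {P F : Type} [DecidableEq P] (eqP : P) (M : Set (Clause P F)) : Set (Clause P F) :=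
  pfClause eqP '' M ∪ {reflClause eqP}

/-- The atom `P̄(t₁,...,tₙ)` for the atom `P(t₁,...,tₙ)`, where `bar` maps each predicate
symbol `P` to the fresh predicate symbol `P̄` uniquely associated with it. -/
def barAtom {P F : Type} (bar : P → P) (a : Atom P F) : Atom P F := ⟨bar a.pred, a.args⟩

/-- Basic shifting of a clause: the body atoms containing a proper functional term are
moved, negated (via `bar`), into the head. -/
def bsClause {P F : Type} (bar : P → P) (C : Clause P F) : Clause P F :=
  ⟨C.heads ++ (C.body.filter (fun a => a.hasPF)).map (barAtom bar),
   C.body.filter (fun a => !a.hasPF)⟩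

/-- The predicate symbols (with arities) of shifted atoms of `M`. -/
def shiftedPreds {P F : Type} (M : Set (Clause P F)) : Set (P × ℕ) :=
  { pn | ∃ C ∈ M, ∃ a ∈ C.body, a.hasPF = true ∧ pn = (a.pred, a.args.length) }

/-- The basic shifting transformation `bs`: shift deep body atoms and add the shifted atom
consistency clauses `⊥ ← P(x₁,...,xₙ) ∧ P̄(x₁,...,xₙ)`. -/
def bs {P F : Type} (bar : P → P) (M : Set (Clause P F)) : Set (Clause P F) :=
  bsClause bar '' M ∪
  { D | ∃ pn ∈ shiftedPreds M,
        D = ⟨[], [⟨pn.1, rangeVars pn.2⟩, ⟨bar pn.1, rangeVars pn.2⟩]⟩ }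

/-- The shifting transformation: `sh(M) = bs(pf(M))`. -/
def sh {P F : Type} [DecidableEq P] (eqP : P) (bar : P → P) (M : Set (Clause P F)) :
    Set (Clause P F) :=
  bs bar (pf eqP M)

/-! ### Blocking -/

/-- The head `x ≈ y ∨ x ≉ y` of the blocking clauses. -/
def blockSplitHead {P F : Type} (eqP neqP : P) : List (Atom P F) :=
  [eqAtom eqP (Term.var 0) (Term.var 1), eqAtom neqP (Term.var 0) (Term.var 1)]

/-- The clause `⊥ ← x ≈ y ∧ x ≉ y`. -/
def eqNeqBot {P F : Type} (eqP neqP : P) : Clause P F :=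
  ⟨[], [eqAtom eqP (Term.var 0) (Term.var 1), eqAtom neqP (Term.var 0) (Term.var 1)]⟩

/-- The unrestricted domain blocking transformation `blud`. -/
def blud {P F : Type} (domP eqP neqP : P) (M : Set (Clause P F)) : Set (Clause P F) :=
  M ∪ { ⟨blockSplitHead eqP neqP, [domAtom domP (Term.var 0), domAtom domP (Term.var 1)]⟩,
        eqNeqBot eqP neqP }

/-- The atom `sub(s,t)`. -/
def subAtom {P F : Type} (subP : P) (s t : Term F) : Atom P F := ⟨subP, [s, t]⟩

/-- The axioms describing the subterm relationship: `sub(x,x) ← dom(x)` and, for every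
`n`-ary function symbol `f` of the signature and `1 ≤ i ≤ n`,
`sub(x, f(x₁,...,xₙ)) ← sub(x,xᵢ) ∧ dom(x) ∧ dom(f(x₁,...,xₙ))`. -/
def subClauses {P F : Type} (domP subP : P) (Fs : Set (F × ℕ)) : Set (Clause P F) :=
  { ⟨[subAtom subP (Term.var 0) (Term.var 0)], [domAtom domP (Term.var 0)]⟩ } ∪
  { D | ∃ fn ∈ Fs, ∃ i, i < fn.2 ∧
        D = ⟨[subAtom subP (Term.var fn.2) (Term.app fn.1 (rangeVars fn.2))],
             [subAtom subP (Term.var fn.2) (Term.var i),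
              domAtom domP (Term.var fn.2),
              domAtom domP (Term.app fn.1 (rangeVars fn.2))]⟩ }

/-- The subterm domain blocking transformation `blsd`. -/
def blsd {P F : Type} (σ : Sig P F) (domP eqP neqP subP : P) (M : Set (Clause P F)) :
    Set (Clause P F) :=
  M ∪ subClauses domP subP σ.funcs ∪
  { ⟨blockSplitHead eqP neqP, [subAtom subP (Term.var 0) (Term.var 1)]⟩,
    eqNeqBot eqP neqP }

/-- The subterm predicate blocking transformation `blsp`. -/
def blsp {P F : Type} (σ : Sig P F) (domP eqP neqP subP : P) (M : Set (Clause P F)) :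
    Set (Clause P F) :=
  M ∪ subClauses domP subP σ.funcs ∪
  { D | ∃ p : P, (p, 1) ∈ σ.preds ∧
        D = ⟨blockSplitHead eqP neqP,
             [subAtom subP (Term.var 0) (Term.var 1),
              ⟨p, [Term.var 0]⟩, ⟨p, [Term.var 1]⟩]⟩ } ∪
  { eqNeqBot eqP neqP }

/-- The unrestricted predicate blocking transformation `blup`. -/
def blup {P F : Type} (σ : Sig P F) (domP eqP neqP : P) (M : Set (Clause P F)) :
    Set (Clause P F) :=
  M ∪ { D | ∃ p : P, (p, 1) ∈ σ.preds ∧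
        D = ⟨blockSplitHead eqP neqP, [⟨p, [Term.var 0]⟩, ⟨p, [Term.var 1]⟩]⟩ } ∪
  { eqNeqBot eqP neqP }

/-! ### Combined transformations -/

/-- The base transformations `rr`, `sh∘rr`, `crr`, `sh∘crr`
(composition read left-to-right, so `(sh∘rr)(M) = rr(sh(M))`). -/
inductive BaseTr | rr | shrr | crr | shcrr

/-- The optional blocking transformations. -/
inductive BlockTr | id | blsd | blsp | blud | blup

def applyBase {P F : Type} [DecidableEq P] [DecidableEq F] (σ : Sig P F) (domP : P) (c : F)
    (eqP : P) (bar : P → P) : BaseTr → Set (Clause P F) → Set (Clause P F)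
  | .rr, M => rr σ domP c M
  | .shrr, M => rr σ domP c (sh eqP bar M)
  | .crr, M => crr σ domP c M
  | .shcrr, M => crr σ domP c (sh eqP bar M)

def applyBlock {P F : Type} (σ : Sig P F) (domP eqP neqP subP : P) :
    BlockTr → Set (Clause P F) → Set (Clause P F)
  | .id, M => M
  | .blsd, M => blsd σ domP eqP neqP subP M
  | .blsp, M => blsp σ domP eqP neqP subP M
  | .blud, M => blud domP eqP neqP M
  | .blup, M => blup σ domP eqP neqP M

/-- A combined transformation: a base transformation optionally followed by a blocking
transformation (composition read left-to-right). -/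
def applyTr {P F : Type} [DecidableEq P] [DecidableEq F] (σ : Sig P F) (domP : P) (c : F)
    (eqP neqP subP : P) (bar : P → P) (b : BaseTr) (τ : BlockTr) (M : Set (Clause P F)) :
    Set (Clause P F) :=
  applyBlock σ domP eqP neqP subP τ (applyBase σ domP c eqP bar b M)

/-- The clause `x ≈ x ← dom(x)`. -/
def reflDomClause {P F : Type} (domP eqP : P) : Clause P F :=
  ⟨[eqAtom eqP (Term.var 0) (Term.var 0)], [domAtom domP (Term.var 0)]⟩

end BUMG

namespace BUMG


/-!
Extending a model of `M` by `dom(t)` for every ground term `t` gives a model of `crr(M)`: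
`dom` is fresh, so the bodies of the clauses of `M` do not see it. Conversely, in a model `I` of
`crr(M)` the predicate `dom` holds on the Herbrand universe generated by `c` and the function
symbols of `σ`. Retracting every term into that universe turns `I` into a model of `M`: the
retraction of a ground instance of a clause of `M` is again a ground instance of it, now with
all variables mapped into `dom`, so the range-restricted clause applies to it.
-/

namespace Term
variable {F : Type}

@[simp] theorem subst_var (g : ℕ → Term F) (n : ℕ) : (var n).subst g = g n := by
  rw [subst]

@[simp] theorem subst_app (g : ℕ → Term F) (f : F) (ts : List (Term F)) :
    (app f ts).subst g = app f (ts.map (subst g)) := by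
  rw [subst, List.attach_map_val]

@[simp] theorem vars_var (n : ℕ) : (var n : Term F).vars = [n] := by
  rw [vars]

@[simp] theorem vars_app (f : F) (ts : List (Term F)) :
    (app f ts).vars = ts.flatMap vars := by
  rw [vars, List.flatMap_subtype fun _ _ => rfl, List.unattach_attach]

@[simp] theorem funcs_app (f : F) (ts : List (Term F)) :
    (app f ts).funcs = (f, ts.length) :: ts.flatMap funcs := by
  rw [funcs, List.flatMap_subtype fun _ _ => rfl, List.unattach_attach]

@[induction_eliminator]
theorem induction {motive : Term F → Prop} (var : ∀ n, motive (var n))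
    (app : ∀ f ts, (∀ t ∈ ts, motive t) → motive (app f ts)) : ∀ t, motive t
  | .var n => var n
  | .app f ts => app f ts fun t _ => induction var app t
decreasing_by simp_wf; have := List.sizeOf_lt_of_mem ‹t ∈ ts›; omega

theorem isGround_app {f : F} {ts : List (Term F)} :
    (app f ts).IsGround ↔ ∀ t ∈ ts, t.IsGround := by
  simp [IsGround]

theorem IsGround.subst {g : ℕ → Term F} (hg : GroundSubst g) (t : Term F) :
    (t.subst g).IsGround := by
  induction t with
  | var n => simpa using hg n
  | app f ts ih => simpa [isGround_app] using ih

open Classical in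
/-- Retraction onto the Herbrand universe generated by `Fs` and `c`. -/
noncomputable def retract (Fs : Set (F × ℕ)) (c : F) : Term F → Term F
  | var _ => cTerm c
  | app f ts =>
      if (f, ts.length) ∈ Fs then app f (ts.attach.map fun t => retract Fs c t.1) else cTerm c
decreasing_by simp_wf; have := List.sizeOf_lt_of_mem t.2; omega

variable {Fs : Set (F × ℕ)} {c : F}

@[simp] theorem retract_var (n : ℕ) : (var n).retract Fs c = cTerm c := by
  rw [retract]

theorem retract_app_of_mem {f : F} {ts : List (Term F)} (h : (f, ts.length) ∈ Fs) :
    (app f ts).retract Fs c = app f (ts.map (retract Fs c)) := by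
  rw [retract, if_pos h, List.attach_map_val]

theorem retract_app_of_not_mem {f : F} {ts : List (Term F)} (h : (f, ts.length) ∉ Fs) :
    (app f ts).retract Fs c = cTerm c := by
  rw [retract, if_neg h]

theorem isGround_retract (t : Term F) : (t.retract Fs c).IsGround := by
  induction t with
  | var n => simp [IsGround, cTerm]
  | app f ts ih =>
    by_cases hf : (f, ts.length) ∈ Fs
    · simpa [retract_app_of_mem hf, isGround_app] using ih
    · simp [retract_app_of_not_mem hf, IsGround, cTerm]

theorem retract_subst {g : ℕ → Term F} {t : Term F} (ht : ∀ fn ∈ t.funcs, fn ∈ Fs) :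
    (t.subst g).retract Fs c = t.subst fun n => (g n).retract Fs c := by
  induction t with
  | var n => simp
  | app f ts ih =>
    have hf : (f, ts.length) ∈ Fs := ht _ (by simp)
    rw [subst_app, retract_app_of_mem (by simpa using hf), subst_app, List.map_map]
    refine congrArg _ (List.map_congr_left fun t hts => ih t hts fun fn hfn => ht fn ?_)
    simpa using Or.inr ⟨t, hts, hfn⟩

end Term

namespace Atom
variable {P F : Type}

theorem IsGround.subst {g : ℕ → Term F} (hg : GroundSubst g) (a : Atom P F) :
    (a.subst g).IsGround := by
  simpa [Atom.IsGround, Atom.vars, Atom.subst, Term.IsGround] using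
    fun t _ => Term.IsGround.subst hg t

noncomputable def retract (Fs : Set (F × ℕ)) (c : F) (a : Atom P F) : Atom P F :=
  ⟨a.pred, a.args.map (Term.retract Fs c)⟩

theorem retract_subst {Fs : Set (F × ℕ)} {c : F} {g : ℕ → Term F} {a : Atom P F}
    (ha : ∀ fn ∈ a.funcs, fn ∈ Fs) :
    (a.subst g).retract Fs c = a.subst fun n => (g n).retract Fs c := by
  simp only [retract, subst, List.map_map, mk.injEq, true_and]
  exact List.map_congr_left fun t ht =>
    Term.retract_subst fun fn hfn => ha fn (List.mem_flatMap.2 ⟨t, ht, hfn⟩)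

end Atom

section
variable {P F : Type}

@[simp] theorem domAtom_subst (domP : P) (g : ℕ → Term F) (t : Term F) :
    (domAtom domP t).subst g = domAtom domP (t.subst g) := rfl

theorem isGround_cTerm (c : F) : (cTerm c).IsGround := by
  simp [Term.IsGround, cTerm]

theorem Clause.vars_eq_headVars_append (C : Clause P F) : C.vars = C.headVars ++ C.bodyVars := by
  simp [Clause.vars, Clause.atoms, Clause.headVars, Clause.bodyVars]

theorem rangeRestrictClause_domcClause (domP : P) (c : F) :
    rangeRestrictClause domP (domcClause domP c) = domcClause domP c := by
  simp [rangeRestrictClause, domcClause, Clause.headVars, Atom.vars, domAtom, cTerm]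

theorem mem_body_rangeRestrictClause {domP : P} {C : Clause P F} {a : Atom P F}
    (ha : a ∈ (rangeRestrictClause domP C).body) :
    a ∈ C.body ∨ ∃ v, a = domAtom domP (.var v) := by
  simp only [rangeRestrictClause, List.mem_append, List.mem_map] at ha
  exact ha.imp_right fun ⟨v, _, hv⟩ => ⟨v, hv.symm⟩

theorem rangeRestrictClause_rangeRestricted (domP : P) (C : Clause P F) :
    (rangeRestrictClause domP C).RangeRestricted := by
  have hbody : (rangeRestrictClause domP C).bodyVars =
      C.bodyVars ++ (C.headVars.filter (· ∉ C.bodyVars)).dedup := by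
    simp [rangeRestrictClause, Clause.bodyVars, List.flatMap_map, domAtom, Atom.vars]
  intro v hv
  rw [Clause.vars_eq_headVars_append, hbody] at hv
  rw [hbody]
  by_cases hvb : v ∈ C.bodyVars
  · exact List.mem_append_left _ hvb
  · simp_all [rangeRestrictClause, Clause.headVars]

theorem crrStep3_rangeRestricted (domP : P) {Fs : Set (F × ℕ)} {D : Clause P F}
    (hD : D ∈ crrStep3 domP Fs) : D.RangeRestricted := by
  obtain ⟨fn, -, rfl⟩ := hD
  intro v hv
  simpa [Clause.vars_eq_headVars_append, Clause.headVars, Clause.bodyVars, Atom.vars, domAtom,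
    rangeVars, List.flatMap_map] using hv

theorem crr_rangeRestricted [DecidableEq P] [DecidableEq F] (σ : Sig P F) (domP : P) (c : F)
    (M : Set (Clause P F)) : RangeRestrictedSet (crr σ domP c M) := by
  rintro D (⟨C, -, rfl⟩ | hD)
  · exact rangeRestrictClause_rangeRestricted domP C
  · exact crrStep3_rangeRestricted domP hD

theorem satClause_of_domAtom_mem_heads {domP : P} {I : Set (Atom P F)}
    (hI : domAtom domP '' {t | t.IsGround} ⊆ I) {C : Clause P F} {t : Term F}
    (ht : domAtom domP t ∈ C.heads) : satClause I C :=
  fun g hg _ => ⟨_, ht, hI ⟨t.subst g, Term.IsGround.subst hg t, rfl⟩⟩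

theorem satClause_rangeRestrictClause {domP : P} {I : Set (Atom P F)} {C : Clause P F}
    (hC : satClause I C) (hdom : ∀ a ∈ C.body, a.pred ≠ domP) :
    satClause (I ∪ domAtom domP '' {t | t.IsGround}) (rangeRestrictClause domP C) := by
  intro g hg hbody
  have hbodyI : ∀ a ∈ C.body, a.subst g ∈ I := fun a ha => by
    rcases hbody a (List.mem_append_left _ ha) with h | ⟨t, -, h⟩
    · exact h
    · exact absurd (congrArg Atom.pred h).symm (hdom a ha)
  obtain ⟨a, ha, haI⟩ := hC g hg hbodyI
  exact ⟨a, ha, Or.inl haI⟩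

theorem satisfiable_crr_of_satisfiable [DecidableEq P] [DecidableEq F] (σ : Sig P F)
    {domP : P} (c : F) {M : Set (Clause P F)} (hdom : ∀ C ∈ M, ∀ a ∈ C.body, a.pred ≠ domP)
    (hM : Satisfiable M) : Satisfiable (crr σ domP c M) := by
  obtain ⟨I, hIg, hI⟩ := hM
  refine ⟨I ∪ domAtom domP '' {t | t.IsGround}, ?_, ?_⟩
  · rintro a (ha | ⟨t, ht, rfl⟩)
    · exact hIg a ha
    · simpa [Atom.IsGround, Atom.vars, domAtom, Term.IsGround] using ht
  · rintro D (⟨C, hC | rfl, rfl⟩ | ⟨fn, -, rfl⟩)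
    · exact satClause_rangeRestrictClause (hI C hC) (hdom C hC)
    · rw [rangeRestrictClause_domcClause]
      exact satClause_of_domAtom_mem_heads Set.subset_union_right (List.mem_singleton_self _)
    · exact satClause_of_domAtom_mem_heads Set.subset_union_right (List.mem_singleton_self _)

theorem domAtom_cTerm_mem {domP : P} {c : F} {I : Set (Atom P F)}
    (hI : satClause I (domcClause domP c)) : domAtom domP (cTerm c) ∈ I := by
  obtain ⟨a, ha, haI⟩ := hI (fun _ => cTerm c) (fun _ => isGround_cTerm c) (by simp [domcClause])
  obtain rfl : a = domAtom domP (cTerm c) := by simpa [domcClause] using ha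
  simpa [cTerm] using haI

theorem domAtom_app_mem {domP : P} {I : Set (Atom P F)} {f : F} {n : ℕ}
    (hI : satClause I ⟨[domAtom domP (.app f (rangeVars n))],
      (List.range n).map fun i => domAtom domP (.var i)⟩)
    {g : ℕ → Term F} (hg : GroundSubst g) (hdom : ∀ i < n, domAtom domP (g i) ∈ I) :
    domAtom domP (.app f ((List.range n).map g)) ∈ I := by
  obtain ⟨a, ha, haI⟩ := hI g hg (by simpa using hdom)
  obtain rfl : a = domAtom domP (.app f (rangeVars n)) := by simpa using ha
  simpa [rangeVars, Function.comp_def] using haI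

theorem domAtom_retract_mem {domP : P} {Fs : Set (F × ℕ)} {c : F} {I : Set (Atom P F)}
    (hc : domAtom domP (cTerm c) ∈ I) (hstep3 : ∀ D ∈ crrStep3 domP Fs, satClause I D)
    (t : Term F) : domAtom domP (t.retract Fs c) ∈ I := by
  induction t with
  | var n => simpa using hc
  | app f ts ih =>
    by_cases hf : (f, ts.length) ∈ Fs
    · have hargs : ts.map (Term.retract Fs c) =
          (List.range ts.length).map fun i => (ts.getD i (cTerm c)).retract Fs c := by
        refine List.ext_getElem (by simp) fun i hi _ => ?_
        simp only [List.length_map] at hi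
        simp [hi]
      rw [Term.retract_app_of_mem hf, hargs]
      exact domAtom_app_mem (hstep3 _ ⟨_, hf, rfl⟩) (fun _ => Term.isGround_retract _)
        fun i hi => by simpa [hi] using ih _ (List.getElem_mem hi)
    · simpa [Term.retract_app_of_not_mem hf] using hc

theorem satClause_retract {domP : P} {Fs : Set (F × ℕ)} {c : F} {I : Set (Atom P F)}
    {C : Clause P F} (hC : ∀ fn ∈ C.funcs, fn ∈ Fs)
    (hrr : satClause I (rangeRestrictClause domP C))
    (hdom : ∀ t : Term F, domAtom domP (t.retract Fs c) ∈ I) :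
    satClause {a | a.IsGround ∧ a.retract Fs c ∈ I} C := by
  have hatom : ∀ a ∈ C.atoms, ∀ fn ∈ a.funcs, fn ∈ Fs :=
    fun a ha fn hfn => hC fn (List.mem_flatMap.2 ⟨a, ha, hfn⟩)
  intro g hg hbody
  have hbodyI : ∀ a ∈ (rangeRestrictClause domP C).body,
      a.subst (fun n => (g n).retract Fs c) ∈ I := fun a ha => by
    rcases mem_body_rangeRestrictClause ha with ha | ⟨v, rfl⟩
    · rw [← Atom.retract_subst (hatom a (List.mem_append_right _ ha))]
      exact (hbody a ha).2
    · simpa using hdom (g v)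
  obtain ⟨a, ha, haI⟩ := hrr _ (fun _ => Term.isGround_retract _) hbodyI
  refine ⟨a, ha, Atom.IsGround.subst hg a, ?_⟩
  rwa [Atom.retract_subst (hatom a (List.mem_append_left _ ha))]

theorem satisfiable_of_satisfiable_crr [DecidableEq P] [DecidableEq F] {σ : Sig P F}
    {domP : P} {c : F} {M : Set (Clause P F)}
    (hfuncs : ∀ C ∈ M, ∀ fn ∈ C.funcs, fn ∈ σ.funcs) (h : Satisfiable (crr σ domP c M)) :
    Satisfiable M := by
  obtain ⟨I, -, hI⟩ := h
  have hc : domAtom domP (cTerm c) ∈ I := domAtom_cTerm_mem <|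
    rangeRestrictClause_domcClause domP c ▸ hI _ (Or.inl ⟨_, Or.inr rfl, rfl⟩)
  have hdom := domAtom_retract_mem hc fun D hD => hI D (Or.inr hD)
  exact ⟨_, fun a ha => ha.1,
    fun C hC => satClause_retract (hfuncs C hC) (hI _ (Or.inl ⟨C, Or.inl hC, rfl⟩)) hdom⟩

end

theorem crr_rangeRestricted_and_correct_general {P F : Type} [DecidableEq P] [DecidableEq F]
    (σ : Sig P F) (domP : P) (c : F) (M : Set (Clause P F))
    (hwf : WFSet σ M)
    (hdomFresh : ∀ n, (domP, n) ∉ σ.preds) :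
    RangeRestrictedSet (crr σ domP c M) ∧
    (Satisfiable M ↔ Satisfiable (crr σ domP c M)) := by
  have hdom : ∀ C ∈ M, ∀ a ∈ C.body, a.pred ≠ domP := fun C hC a ha hpred =>
    hdomFresh a.args.length <| hpred ▸
      (hwf C hC).1 _ (List.mem_map_of_mem (List.mem_append_right _ ha))
  exact ⟨crr_rangeRestricted σ domP c M, satisfiable_crr_of_satisfiable σ c hdom,
    satisfiable_of_satisfiable_crr fun C hC => (hwf C hC).2⟩

/-- For every clause set `M`, the clause set `crr(M)` is range-restricted, and `M` is
satisfiable if and only if `crr(M)` is satisfiable. -/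
theorem crr_rangeRestricted_and_correct {P F : Type} [DecidableEq P] [DecidableEq F]
    (σ : Sig P F) (domP : P) (c : F) (M : Set (Clause P F))
    (hfin : M.Finite) (hwf : WFSet σ M)
    (hdomFresh : ∀ n, (domP, n) ∉ σ.preds) :
    RangeRestrictedSet (crr σ domP c M) ∧
    (Satisfiable M ↔ Satisfiable (crr σ domP c M)) :=
  crr_rangeRestricted_and_correct_general σ domP c M hwf hdomFresh

end BUMG
end

section
/- Completeness of basic shifting: for every clause set M, if bs(M) is satisfiable then M is satisfiable. -/
/-
A model `I` of `bs(M)` is already a model of `M`. Take a ground instance of a clause of `M`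
whose body holds in `I`. Its shifted clause then has a true head atom. That atom cannot be
`B̄ᵢ` for a shifted body atom `Bᵢ`: `Bᵢ` is true, and the clause `⊥ ← P(x⃗) ∧ P̄(x⃗)`
instantiated at the arguments of `Bᵢ` forbids `P̄` to hold there as well. So the true head
atom is one of the original heads.
-/

namespace BUMG

variable {P F : Type}

theorem Term.isGround_subst {g : ℕ → Term F} (hg : GroundSubst g) (t : Term F) :
    (t.subst g).IsGround := by
  induction t using Term.subst.induct with
  | case1 n => simpa [Term.subst] using hg n
  | case2 f ts ih =>
    rw [Term.subst, Term.IsGround, Term.vars, List.flatMap_eq_nil_iff]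
    rintro ⟨_, hmem⟩ -
    obtain ⟨t, ht, rfl⟩ := List.mem_map.mp hmem
    exact ih t

theorem map_subst_rangeVars (ts : List (Term F)) (d : Term F) :
    (rangeVars ts.length).map (Term.subst fun i => ts.getD i d) = ts := by
  apply List.ext_getElem (by simp [rangeVars])
  intro i _ hi
  simp [rangeVars, Term.subst, List.getElem?_eq_getElem hi]

theorem groundSubst_getD {ts : List (Term F)} {d : Term F} (hts : ∀ t ∈ ts, t.IsGround)
    (hd : d.IsGround) : GroundSubst fun i => ts.getD i d := by
  intro i
  dsimp only
  rw [List.getD_eq_getElem?_getD]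
  cases h : ts[i]? with
  | none => exact hd
  | some t => exact hts t (List.mem_of_getElem? h)

def shiftConsistencyClause (bar : P → P) (pn : P × ℕ) : Clause P F :=
  ⟨[], [⟨pn.1, rangeVars pn.2⟩, ⟨bar pn.1, rangeVars pn.2⟩]⟩

theorem barAtom_subst_not_mem {bar : P → P} {I : Set (Atom P F)} {a : Atom P F}
    {g : ℕ → Term F} (hg : GroundSubst g)
    (hI : satClause I (shiftConsistencyClause bar (a.pred, a.args.length)))
    (ha : a.subst g ∈ I) : (barAtom bar a).subst g ∉ I := by
  intro hbar
  set ts := a.args.map (Term.subst g)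
  have hts : ∀ t ∈ ts, t.IsGround := by
    simp only [ts, List.forall_mem_map]
    exact fun t _ => Term.isGround_subst hg t
  have hinst (p : P) :
      Atom.subst (fun i => ts.getD i (g 0)) ⟨p, rangeVars a.args.length⟩ = ⟨p, ts⟩ := by
    rw [Atom.subst, ← List.length_map (Term.subst g), map_subst_rangeVars]
  obtain ⟨_, hhead, -⟩ := hI _ (groundSubst_getD hts (hg 0)) <| by
    intro b hb
    rcases List.mem_pair.mp hb with rfl | rfl
    · exact (hinst a.pred).symm ▸ ha
    · exact (hinst (bar a.pred)).symm ▸ hbar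
  exact List.not_mem_nil hhead

theorem satClause_of_satClause_bsClause {bar : P → P} {I : Set (Atom P F)} {C : Clause P F}
    (hC : satClause I (bsClause bar C))
    (hcons : ∀ a ∈ C.body, a.hasPF →
      satClause I (shiftConsistencyClause bar (a.pred, a.args.length))) :
    satClause I C := by
  intro g hg hbody
  obtain ⟨b, hb, hbI⟩ := hC g hg fun a ha => hbody a (List.mem_of_mem_filter ha)
  rcases List.mem_append.mp hb with hhead | hshifted
  · exact ⟨b, hhead, hbI⟩
  · obtain ⟨a, ha, rfl⟩ := List.mem_map.mp hshifted
    obtain ⟨haC, hpf⟩ := List.mem_filter.mp ha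
    exact absurd hbI (barAtom_subst_not_mem hg (hcons a haC hpf) (hbody a haC))

theorem bs_completeness_general {P F : Type}
    (bar : P → P) (M : Set (Clause P F))
    (hsat : Satisfiable (bs bar M)) :
    Satisfiable M := by
  obtain ⟨I, hIground, hI⟩ := hsat
  have hshifted : ∀ C ∈ M, satClause I (bsClause bar C) :=
    fun C hC => hI _ (Or.inl ⟨C, hC, rfl⟩)
  have hconsistent : ∀ C ∈ M, ∀ a ∈ C.body, a.hasPF →
      satClause I (shiftConsistencyClause bar (a.pred, a.args.length)) :=
    fun C hC a ha hpf => hI _ (Or.inr ⟨_, ⟨C, hC, a, ha, hpf, rfl⟩, rfl⟩)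
  exact ⟨I, hIground, fun C hC =>
    satClause_of_satClause_bsClause (hshifted C hC) (hconsistent C hC)⟩

/-- **Completeness of basic shifting**: for every clause set `M`, if `bs(M)` is satisfiable
then `M` is satisfiable. Here `bar` assigns to every predicate symbol `P` the fresh
predicate symbol `P̄` uniquely associated with it. -/
theorem bs_completeness {P F : Type} [DecidableEq P] [DecidableEq F]
    (bar : P → P) (M : Set (Clause P F)) (hfin : M.Finite)
    (hbarInj : Function.Injective bar)
    (hbarFresh : ∀ p n, (bar p, n) ∉ predsOf M)
    (hsat : Satisfiable (bs bar M)) :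
    Satisfiable M :=
  bs_completeness_general bar M hsat

end BUMG
end
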